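/- In a K3 category D (a ℂ-linear triangulated category of finite type whose Serre functor is the double shift [2]), consider an exact triangle A → E → B → A[1] with Ext^r(A, B) = 0 for all r ≤ 0 and Ext^s(B, B) = 0 for all s < 0. Then dim Ext^1(A, A) + dim Ext^1(B, B) ≤ dim Ext^1(E, E). -/

import Mathlib

/-!
Look at the linear map `β = (· ≫ g⟦1⟧') : Hom(E, E⟦1⟧) → Hom(E, B⟦1⟧)`. Its image contains
`g ≫ Hom(B, B⟦1⟧)`, a copy of `Ext¹(B, B)`: precomposition with `g` is injective because
`Hom(A, B) = 0`, and `g ≫ x` lifts along `g⟦1⟧` because `x ≫ h⟦1⟧'` lies in `Ext²(B, A)`, which is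
dual to `Hom(A, B) = 0`. Its kernel contains the image of `u = (· ≫ f⟦1⟧')` on `Hom(E, A⟦1⟧)`, and
restriction along `f` maps `Hom(E, A⟦1⟧)` onto `Ext¹(A, A)` (its cokernel lies in `Ext²(B, A)`)
while killing `ker u` (which consists of maps `E → B → A⟦1⟧`, and `Hom(A, B) = 0`).
Rank-nullity for `β` then gives the inequality.
-/

open CategoryTheory CategoryTheory.Limits CategoryTheory.Pretriangulated

universe u v

theorem LinearMap.finrank_le_finrank_range_of_ker_le {K X V Y : Type*} [DivisionRing K]
    [AddCommGroup X] [Module K X] [AddCommGroup V] [Module K V] [AddCommGroup Y] [Module K Y]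
    [FiniteDimensional K X] {u : X →ₗ[K] V} {v : X →ₗ[K] Y}
    (huv : LinearMap.ker u ≤ LinearMap.ker v) (hv : Function.Surjective v) :
    Module.finrank K Y ≤ Module.finrank K (LinearMap.range u) := by
  have hker := Submodule.finrank_mono huv
  have hu := LinearMap.finrank_range_add_finrank_ker u
  have hv' := LinearMap.finrank_range_add_finrank_ker v
  rw [LinearMap.range_eq_top.mpr hv, finrank_top] at hv'
  omega

namespace CategoryTheory.Pretriangulated

variable {C : Type*} [Category C] [HasShift C ℤ]

theorem subsingleton_hom_shift_shift {X Y : C} (n : ℤ) [Subsingleton (X ⟶ Y)] :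
    Subsingleton (X⟦n⟧ ⟶ Y⟦n⟧) :=
  (Functor.FullyFaithful.ofFullyFaithful (shiftFunctor C n)).homEquiv.symm.subsingleton

theorem subsingleton_hom_shift_shift_of_add_eq {X Y : C} {a b c : ℤ} (hc : a + b = c)
    [Subsingleton (X ⟶ Y⟦c⟧)] : Subsingleton (X ⟶ Y⟦a⟧⟦b⟧) :=
  ((Iso.refl X).homCongr ((shiftFunctorAdd' C a b c hc).app Y)).symm.subsingleton

theorem subsingleton_shift_neg_hom {X Y : C} (n : ℤ) [Subsingleton (X ⟶ Y⟦n⟧)] :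
    Subsingleton (X⟦-n⟧ ⟶ Y) :=
  ((shiftEquiv C n).symm.toAdjunction.homEquiv X Y).subsingleton_congr.mpr ‹_›

variable [Preadditive C] [HasZeroObject C] [∀ n : ℤ, (shiftFunctor C n).Additive]
  [Pretriangulated C] {A E B : C} {f : A ⟶ E} {g : E ⟶ B} {h : B ⟶ A⟦(1 : ℤ)⟧}

theorem eq_zero_of_mor₂_comp_eq_zero (hT : Triangle.mk f g h ∈ distTriang C) {Y : C}
    [Subsingleton (A⟦(1 : ℤ)⟧ ⟶ Y)] {x : B ⟶ Y} (hx : g ≫ x = 0) : x = 0 := by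
  obtain ⟨y, rfl⟩ : ∃ y : A⟦(1 : ℤ)⟧ ⟶ Y, x = h ≫ y :=
    Triangle.yoneda_exact₂ _ (rot_of_distTriang _ hT) x hx
  rw [Subsingleton.elim y 0, comp_zero]

theorem exists_mor₁_comp_eq (hT : Triangle.mk f g h ∈ distTriang C) {Y : C}
    [Subsingleton (B⟦(-1 : ℤ)⟧ ⟶ Y)] (ψ : A ⟶ Y) : ∃ χ : E ⟶ Y, f ≫ χ = ψ := by
  obtain ⟨χ, hχ⟩ := Triangle.yoneda_exact₂ _ (inv_rot_of_distTriang _ hT) ψ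
    (Subsingleton.elim (α := B⟦(-1 : ℤ)⟧ ⟶ Y) _ 0)
  exact ⟨χ, hχ.symm⟩

theorem exists_comp_shift_mor₂_eq (hT : Triangle.mk f g h ∈ distTriang C) {X : C}
    (ψ : X ⟶ B⟦(1 : ℤ)⟧) (hψ : ψ ≫ h⟦(1 : ℤ)⟧' = 0) :
    ∃ χ : X ⟶ E⟦(1 : ℤ)⟧, χ ≫ g⟦1⟧' = ψ := by
  obtain ⟨χ, rfl⟩ : ∃ χ : X ⟶ E⟦(1 : ℤ)⟧, ψ = χ ≫ (-g⟦(1 : ℤ)⟧') :=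
    Triangle.coyoneda_exact₁ _ (rot_of_distTriang _ (rot_of_distTriang _ hT)) ψ hψ
  exact ⟨-χ, by simp⟩

theorem mor₁_comp_eq_zero_of_comp_shift_mor₁_eq_zero (hT : Triangle.mk f g h ∈ distTriang C)
    [Subsingleton (A ⟶ B)] {ψ : E ⟶ A⟦(1 : ℤ)⟧} (hψ : ψ ≫ f⟦1⟧' = 0) : f ≫ ψ = 0 := by
  obtain ⟨χ, rfl⟩ : ∃ χ : E ⟶ B, ψ = χ ≫ h := Triangle.coyoneda_exact₁ _ hT ψ hψ
  rw [← Category.assoc, Subsingleton.elim (f ≫ χ) 0, zero_comp]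

theorem finrank_hom_shift_one_add_le_of_distTriang {K : Type*} [Field K] [Linear K C]
    [∀ X Y : C, FiniteDimensional K (X ⟶ Y)] (hT : Triangle.mk f g h ∈ distTriang C)
    [Subsingleton (A ⟶ B)] [Subsingleton (B ⟶ A⟦(2 : ℤ)⟧)] :
    Module.finrank K (A ⟶ A⟦(1 : ℤ)⟧) + Module.finrank K (B ⟶ B⟦(1 : ℤ)⟧)
      ≤ Module.finrank K (E ⟶ E⟦(1 : ℤ)⟧) := by
  have : Subsingleton (A⟦(1 : ℤ)⟧ ⟶ B⟦(1 : ℤ)⟧) := subsingleton_hom_shift_shift 1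
  have : Subsingleton (B ⟶ A⟦(1 : ℤ)⟧⟦(1 : ℤ)⟧) :=
    subsingleton_hom_shift_shift_of_add_eq (c := 2) rfl
  have : Subsingleton (B⟦(-1 : ℤ)⟧ ⟶ A⟦(1 : ℤ)⟧) := subsingleton_shift_neg_hom 1
  let β := Linear.rightComp K E (g⟦(1 : ℤ)⟧')
  let u := Linear.rightComp K E (f⟦(1 : ℤ)⟧')
  let v := Linear.leftComp K (A⟦(1 : ℤ)⟧) f
  let w := Linear.leftComp K (B⟦(1 : ℤ)⟧) g
  have hw : Function.Injective w := by
    rw [← LinearMap.ker_eq_bot, LinearMap.ker_eq_bot']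
    exact fun _ ↦ eq_zero_of_mor₂_comp_eq_zero hT
  have hwβ : LinearMap.range w ≤ LinearMap.range β := by
    rintro _ ⟨x, rfl⟩
    exact exists_comp_shift_mor₂_eq hT (g ≫ x)
      (by rw [Category.assoc, Subsingleton.elim (x ≫ h⟦1⟧') 0, comp_zero])
  have huβ : LinearMap.range u ≤ LinearMap.ker β := by
    rintro _ ⟨ψ, rfl⟩
    change (ψ ≫ f⟦(1 : ℤ)⟧') ≫ g⟦(1 : ℤ)⟧' = 0
    have hfg : f ≫ g = 0 := comp_distTriang_mor_zero₁₂ _ hT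
    rw [Category.assoc, ← Functor.map_comp, hfg, Functor.map_zero, comp_zero]
  have huv : LinearMap.ker u ≤ LinearMap.ker v :=
    fun _ ↦ mor₁_comp_eq_zero_of_comp_shift_mor₁_eq_zero hT
  have hv : Function.Surjective v := exists_mor₁_comp_eq hT
  have hB := (LinearMap.finrank_range_of_inj hw).symm.le.trans (Submodule.finrank_mono hwβ)
  have hA := (LinearMap.finrank_le_finrank_range_of_ker_le huv hv).trans
    (Submodule.finrank_mono huβ)
  have := LinearMap.finrank_range_add_finrank_ker β
  omega

end CategoryTheory.Pretriangulated

theorem mukai_inequality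
    (D : Type u) [Category.{v} D] [HasZeroObject D] [Preadditive D] [Linear ℂ D]
    [HasShift D ℤ] [∀ n : ℤ, (shiftFunctor D n).Additive] [Pretriangulated D]
    (finType : ∀ A B : D, FiniteDimensional ℂ (A ⟶ B))
    (serre : ∀ (A B : D) (i : ℤ),
      Module.finrank ℂ (A ⟶ B⟦i⟧) = Module.finrank ℂ (B ⟶ A⟦(2 : ℤ) - i⟧))
    (A E B : D) (f : A ⟶ E) (g : E ⟶ B) (h : B ⟶ A⟦(1 : ℤ)⟧)
    (htri : Triangle.mk f g h ∈ distTriang D)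
    (hAB : ∀ r : ℤ, r ≤ 0 → ∀ φ : A ⟶ B⟦r⟧, φ = 0)
    (hBB : ∀ s : ℤ, s < 0 → ∀ φ : B ⟶ B⟦s⟧, φ = 0) :
    Module.finrank ℂ (A ⟶ A⟦(1 : ℤ)⟧) + Module.finrank ℂ (B ⟶ B⟦(1 : ℤ)⟧)
      ≤ Module.finrank ℂ (E ⟶ E⟦(1 : ℤ)⟧) := by
  have := finType
  have : Subsingleton (A ⟶ B⟦(0 : ℤ)⟧) := ⟨fun φ ψ ↦ by rw [hAB 0 le_rfl φ, hAB 0 le_rfl ψ]⟩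
  have : Subsingleton (A ⟶ B) :=
    ((Iso.refl A).homCongr ((shiftFunctorZero D ℤ).app B)).symm.subsingleton
  have : Subsingleton (B ⟶ A⟦(2 : ℤ)⟧) := by
    rw [← Module.finrank_zero_iff (R := ℂ), serre, sub_self]
    exact Module.finrank_zero_of_subsingleton
  exact finrank_hom_shift_one_add_le_of_distTriang htri
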